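/- Let N ≥ 2 be even. Define the 2×2 matrix polynomial Q(z) = [[(z+1)²+4β²z, −2α(α+β)(z+1)], [−2β(α+β)z(z+1), (z+1)²+4α²z]] (so that Q(z)·W(z) = W(z)·Q(z) = (z−1)²·I₂ for all z ≠ 1) and the matrix C = [[1, 0], [−Nβ(α+β), 1]]. Then: (i) Q(z)^{N/2} = C·z^N + (terms of degree < N), so that P_N(z) := C⁻¹·Q(z)^{N/2} is a monic 2×2 matrix polynomial of degree N; (ii) the function z ↦ Q(z)^{N/2}·W(z)^N on ℂ ∖ {1} extends to a matrix polynomial, namely Q(z)^{N/2}·W(z)^N = ((z−1)²W(z))^{N/2} where (z−1)²W(z) is a matrix polynomial; (iii) consequently (2πi)⁻¹ ∮_{γ₁} P_N(z)·W(z)^N·z^k dz = 0₂ for every integer k ≥ 0, i.e. P_N is a monic matrix-valued orthogonal polynomial of degree N for the varying weight (2πi)⁻¹ W(z)^N on γ₁. -/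
import Mathlib

open Matrix

/-- The matrix-valued weight `W(z)` of the two-periodic Aztec diamond. -/
noncomputable def symbW (α β : ℝ) (z : ℂ) : Matrix (Fin 2) (Fin 2) ℂ :=
  ((z - 1) ^ 2)⁻¹ •
    !![(z + 1) ^ 2 + 4 * (α : ℂ) ^ 2 * z, 2 * (α : ℂ) * ((α : ℂ) + (β : ℂ)) * (z + 1);
       2 * (β : ℂ) * ((α : ℂ) + (β : ℂ)) * z * (z + 1), (z + 1) ^ 2 + 4 * (β : ℂ) ^ 2 * z]

/-- The adjugate-type matrix polynomial `Q(z)` with `Q(z) W(z) = (z-1)² I₂`. -/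
noncomputable def adjQ (α β : ℝ) (z : ℂ) : Matrix (Fin 2) (Fin 2) ℂ :=
  !![(z + 1) ^ 2 + 4 * (β : ℂ) ^ 2 * z, -(2 * (α : ℂ) * ((α : ℂ) + (β : ℂ)) * (z + 1));
     -(2 * (β : ℂ) * ((α : ℂ) + (β : ℂ)) * z * (z + 1)), (z + 1) ^ 2 + 4 * (α : ℂ) ^ 2 * z]

/-- The leading coefficient matrix `C = [[1,0],[-Nβ(α+β),1]]` of `Q(z)^{N/2}`. -/
noncomputable def leadC (α β : ℝ) (N : ℕ) : Matrix (Fin 2) (Fin 2) ℂ :=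
  !![1, 0; -((N : ℂ) * (β : ℂ) * ((α : ℂ) + (β : ℂ))), 1]

namespace AztecMVOP

open Polynomial

abbrev M2 := Matrix (Fin 2) (Fin 2) ℂ

/-- The numerator matrix `(z-1)² W(z)`. -/
noncomputable def matM (α β : ℝ) (z : ℂ) : M2 :=
  !![(z + 1) ^ 2 + 4 * (α : ℂ) ^ 2 * z, 2 * (α : ℂ) * ((α : ℂ) + (β : ℂ)) * (z + 1);
     2 * (β : ℂ) * ((α : ℂ) + (β : ℂ)) * z * (z + 1), (z + 1) ^ 2 + 4 * (β : ℂ) ^ 2 * z]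

lemma QM (α β : ℝ) (ha : (α : ℂ) ≠ 0) (h : (β : ℂ) = (α : ℂ)⁻¹) (z : ℂ) :
    adjQ α β z * matM α β z = ((z - 1) ^ 4 : ℂ) • 1 := by
  ext i j
  fin_cases i <;> fin_cases j <;>
    simp [adjQ, matM, Matrix.mul_apply, Fin.sum_univ_two, Matrix.one_apply, h] <;>
    field_simp <;> ring

lemma MQ (α β : ℝ) (ha : (α : ℂ) ≠ 0) (h : (β : ℂ) = (α : ℂ)⁻¹) (z : ℂ) :
    matM α β z * adjQ α β z = ((z - 1) ^ 4 : ℂ) • 1 := by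
  ext i j
  fin_cases i <;> fin_cases j <;>
    simp [adjQ, matM, Matrix.mul_apply, Fin.sum_univ_two, Matrix.one_apply, h] <;>
    field_simp <;> ring

/-- Evaluation of a matrix-coefficient polynomial at the central element `z • 1`. -/
noncomputable def evalMat (z : ℂ) : M2[X] →+* M2 :=
  Polynomial.eval₂RingHom' (RingHom.id M2) (z • 1) (fun a => (Commute.one_right a).smul_right z)

lemma evalMat_C (z : ℂ) (a : M2) : evalMat z (Polynomial.C a) = a :=
  Polynomial.eval₂_C (RingHom.id M2) (z • (1 : M2)) (a := a)

lemma evalMat_X (z : ℂ) : evalMat z X = z • 1 :=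
  Polynomial.eval₂_X _ _

lemma evalMat_expand (z : ℂ) {q : M2[X]} {n : ℕ} (hn : q.natDegree < n) :
    evalMat z q = ∑ i ∈ Finset.range n, z ^ i • q.coeff i := by
  have := Polynomial.eval₂_eq_sum_range' (RingHom.id M2) hn (z • (1 : M2))
  simp only [RingHom.id_apply] at this
  calc evalMat z q = Polynomial.eval₂ (RingHom.id M2) (z • 1) q := rfl
    _ = ∑ i ∈ Finset.range n, q.coeff i * (z • 1) ^ i := this
    _ = ∑ i ∈ Finset.range n, z ^ i • q.coeff i := by
        refine Finset.sum_congr rfl fun i _ => ?_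
        rw [_root_.smul_pow, one_pow, mul_smul_comm, mul_one]

lemma Apow (c : ℂ) (m : ℕ) : (!![1, 0; -c, 1] : M2) ^ m = !![1, 0; -(m * c), 1] := by
  induction m with
  | zero =>
    ext i j
    fin_cases i <;> fin_cases j <;> simp [Matrix.one_apply]
  | succ n ih =>
    rw [pow_succ, ih]
    ext i j
    fin_cases i <;> fin_cases j <;>
      simp [Matrix.mul_apply, Fin.sum_univ_two] <;> push_cast <;> ring

/-- `Q` as a polynomial with matrix coefficients. -/
noncomputable def polyQ (α β : ℝ) : M2[X] :=
  Polynomial.C !![(1:ℂ), -(2*(α:ℂ)*((α:ℂ)+(β:ℂ))); 0, 1] +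
  Polynomial.C !![2+4*(β:ℂ)^2, -(2*(α:ℂ)*((α:ℂ)+(β:ℂ))); -(2*(β:ℂ)*((α:ℂ)+(β:ℂ))), 2+4*(α:ℂ)^2] * X +
  Polynomial.C !![(1:ℂ), 0; -(2*(β:ℂ)*((α:ℂ)+(β:ℂ))), 1] * X ^ 2

/-- `M` as a polynomial with matrix coefficients. -/
noncomputable def polyM (α β : ℝ) : M2[X] :=
  Polynomial.C !![(1:ℂ), 2*(α:ℂ)*((α:ℂ)+(β:ℂ)); 0, 1] +
  Polynomial.C !![2+4*(α:ℂ)^2, 2*(α:ℂ)*((α:ℂ)+(β:ℂ)); 2*(β:ℂ)*((α:ℂ)+(β:ℂ)), 2+4*(β:ℂ)^2] * X +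
  Polynomial.C !![(1:ℂ), 0; 2*(β:ℂ)*((α:ℂ)+(β:ℂ)), 1] * X ^ 2

lemma evalMat_polyQ (α β : ℝ) (z : ℂ) : evalMat z (polyQ α β) = adjQ α β z := by
  rw [polyQ, map_add, map_add, _root_.map_mul, _root_.map_mul, map_pow, evalMat_C, evalMat_C,
    evalMat_C, evalMat_X]
  ext i j
  fin_cases i <;> fin_cases j <;>
    simp [adjQ, _root_.smul_pow, Matrix.mul_apply, Fin.sum_univ_two, Matrix.smul_apply,
      Matrix.one_apply] <;> ring

lemma evalMat_polyM (α β : ℝ) (z : ℂ) : evalMat z (polyM α β) = matM α β z := by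
  rw [polyM, map_add, map_add, _root_.map_mul, _root_.map_mul, map_pow, evalMat_C, evalMat_C,
    evalMat_C, evalMat_X]
  ext i j
  fin_cases i <;> fin_cases j <;>
    simp [matM, _root_.smul_pow, Matrix.mul_apply, Fin.sum_univ_two, Matrix.smul_apply,
      Matrix.one_apply] <;> ring

lemma coeff_polyQ_two (α β : ℝ) :
    (polyQ α β).coeff 2 = !![(1:ℂ), 0; -(2*(β:ℂ)*((α:ℂ)+(β:ℂ))), 1] := by
  simp [polyQ, coeff_add, coeff_C, Polynomial.coeff_C_mul, Polynomial.coeff_X_pow,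
    Polynomial.coeff_X]

lemma natDegree_polyQ (α β : ℝ) : (polyQ α β).natDegree = 2 := by
  have h1 : (polyQ α β).natDegree ≤ 2 := by rw [polyQ]; compute_degree
  have h2 : (polyQ α β).coeff 2 ≠ 0 := by
    rw [coeff_polyQ_two]
    intro h
    have := congrFun (congrFun h 0) 0
    simp at this
  exact le_antisymm h1 (Polynomial.le_natDegree_of_ne_zero h2)

lemma leadingCoeff_polyQ (α β : ℝ) :
    (polyQ α β).leadingCoeff = !![(1:ℂ), 0; -(2*(β:ℂ)*((α:ℂ)+(β:ℂ))), 1] := by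
  rw [Polynomial.leadingCoeff, natDegree_polyQ, coeff_polyQ_two]

/-- Explicit inverse of `leadC`. -/
lemma leadC_mul_inv (α β : ℝ) (N : ℕ) :
    leadC α β N * !![1, 0; ((N : ℂ) * (β : ℂ) * ((α : ℂ) + (β : ℂ))), 1] = 1 ∧
    !![1, 0; ((N : ℂ) * (β : ℂ) * ((α : ℂ) + (β : ℂ))), 1] * leadC α β N = 1 := by
  constructor <;>
    · ext i j
      fin_cases i <;> fin_cases j <;>
        simp [leadC, Matrix.mul_apply, Fin.sum_univ_two, Matrix.one_apply] <;> ring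

end AztecMVOP

open AztecMVOP Polynomial in
/-- Explicit monic MVOP for the two-periodic Aztec diamond:
`P_N(z) = C⁻¹ Q(z)^{N/2}` is a monic matrix polynomial of degree `N`,
`Q(z)^{N/2} W(z)^N = ((z-1)² W(z))^{N/2}` extends polynomially, and
`(2πi)⁻¹ ∮_{γ₁} P_N(z) W(z)^N z^k dz = 0` for every `k ≥ 0`. -/
theorem explicit_monic_MVOP (α β : ℝ) (hα : 0 < α) (hβ : 0 < β) (hαβ : α * β = 1)
    (N : ℕ) (hN2 : 2 ≤ N) (hNeven : Even N) :
    (∀ z : ℂ, z ≠ 1 →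
      adjQ α β z * symbW α β z = ((z - 1) ^ 2 : ℂ) • (1 : Matrix (Fin 2) (Fin 2) ℂ) ∧
      symbW α β z * adjQ α β z = ((z - 1) ^ 2 : ℂ) • (1 : Matrix (Fin 2) (Fin 2) ℂ)) ∧
    (∃ D : Fin N → Matrix (Fin 2) (Fin 2) ℂ,
      ∀ z : ℂ, adjQ α β z ^ (N / 2) =
        z ^ N • leadC α β N + ∑ j : Fin N, z ^ (j : ℕ) • D j) ∧
    (∃ D : Fin N → Matrix (Fin 2) (Fin 2) ℂ,
      ∀ z : ℂ, (leadC α β N)⁻¹ * adjQ α β z ^ (N / 2) =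
        z ^ N • (1 : Matrix (Fin 2) (Fin 2) ℂ) + ∑ j : Fin N, z ^ (j : ℕ) • D j) ∧
    (∀ z : ℂ, z ≠ 1 →
      adjQ α β z ^ (N / 2) * symbW α β z ^ N =
        (((z - 1) ^ 2 : ℂ) • symbW α β z) ^ (N / 2)) ∧
    (∀ k : ℕ,
      (Matrix.of fun a b =>
        (2 * (Real.pi : ℂ) * Complex.I)⁻¹ *
          ∮ z in C(1, 1 / 2),
            (z ^ k • ((leadC α β N)⁻¹ * adjQ α β z ^ (N / 2) * symbW α β z ^ N)) a b) =
        (0 : Matrix (Fin 2) (Fin 2) ℂ)) := by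
  have ha : (α : ℂ) ≠ 0 := Complex.ofReal_ne_zero.mpr hα.ne'
  have h1 : (α : ℂ) * (β : ℂ) = 1 := by exact_mod_cast hαβ
  have hb : (β : ℂ) = (α : ℂ)⁻¹ := eq_inv_of_mul_eq_one_right h1
  set m := N / 2 with hmdef
  obtain ⟨r, hr⟩ := hNeven
  have hm : m * 2 = N := by omega
  -- basic: symbW is matM over (z-1)^2
  have hsW : ∀ z : ℂ, symbW α β z = ((z - 1) ^ 2 : ℂ)⁻¹ • matM α β z := fun z => rfl
  have hcz : ∀ z : ℂ, z ≠ 1 → ((z - 1) ^ 2 : ℂ) ≠ 0 := fun z hz =>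
    pow_ne_zero _ (sub_ne_zero.mpr hz)
  -- Part 1
  have part1 : ∀ z : ℂ, z ≠ 1 →
      adjQ α β z * symbW α β z = ((z - 1) ^ 2 : ℂ) • (1 : M2) ∧
      symbW α β z * adjQ α β z = ((z - 1) ^ 2 : ℂ) • (1 : M2) := by
    intro z hz
    have hc := hcz z hz
    have hscal : ((z - 1) ^ 2 : ℂ)⁻¹ * (z - 1) ^ 4 = (z - 1) ^ 2 := by
      field_simp
    constructor
    · rw [hsW, Matrix.mul_smul, QM α β ha hb z, smul_smul, hscal]
    · rw [hsW, Matrix.smul_mul, MQ α β ha hb z, smul_smul, hscal]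
  -- parts 2 and 3 preparation
  have hdegQ : (polyQ α β ^ m).natDegree < N + 1 := by
    refine Nat.lt_succ_of_le (le_trans Polynomial.natDegree_pow_le ?_)
    rw [natDegree_polyQ]; omega
  have hexp : ∀ z : ℂ, adjQ α β z ^ m =
      ∑ i ∈ Finset.range (N + 1), z ^ i • (polyQ α β ^ m).coeff i := by
    intro z
    rw [← evalMat_polyQ α β z, ← map_pow, evalMat_expand z hdegQ]
  have hcoeffN : (polyQ α β ^ m).coeff N = leadC α β N := by
    have h := Polynomial.coeff_pow_mul_natDegree (polyQ α β) m
    rw [natDegree_polyQ, leadingCoeff_polyQ, hm, Apow] at h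
    rw [h]
    ext i j
    fin_cases i <;> fin_cases j <;> simp [leadC] <;>
      · rw [show ((N : ℂ)) = (m : ℂ) * 2 by exact_mod_cast hm.symm]; ring
  have part2 : ∀ z : ℂ, adjQ α β z ^ m =
      z ^ N • leadC α β N + ∑ j : Fin N, z ^ (j : ℕ) • (polyQ α β ^ m).coeff j := by
    intro z
    rw [hexp z, Finset.sum_range_succ, hcoeffN, add_comm]
    congr 1
    exact (Fin.sum_univ_eq_sum_range (fun j => z ^ j • (polyQ α β ^ m).coeff j) N).symm
  have part4 : ∀ z : ℂ, z ≠ 1 →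
      adjQ α β z ^ m * symbW α β z ^ N = (((z - 1) ^ 2 : ℂ) • symbW α β z) ^ m := by
    intro z hz
    have hc := hcz z hz
    have hMzW : ((z - 1) ^ 2 : ℂ) • symbW α β z = matM α β z := by
      rw [hsW, smul_smul, mul_inv_cancel₀ hc, one_smul]
    have hcomm : Commute (adjQ α β z) (matM α β z) :=
      (QM α β ha hb z).trans (MQ α β ha hb z).symm
    have hQMpow : adjQ α β z ^ m * matM α β z ^ m = (((z - 1) ^ 4 : ℂ)) ^ m • 1 := by
      rw [← Commute.mul_pow hcomm, QM α β ha hb z, _root_.smul_pow, one_pow]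
    have hscal : ((((z - 1) ^ 2 : ℂ))⁻¹) ^ N * (((z - 1) ^ 4 : ℂ)) ^ m = 1 := by
      have h4 : (((z - 1) ^ 4 : ℂ)) ^ m = (((z - 1) ^ 2 : ℂ)) ^ N := by
        rw [← pow_mul, ← pow_mul]
        congr 1
        omega
      rw [h4, inv_pow, inv_mul_cancel₀ (pow_ne_zero _ hc)]
    calc adjQ α β z ^ m * symbW α β z ^ N
        = adjQ α β z ^ m * ((((z - 1) ^ 2 : ℂ))⁻¹ • matM α β z) ^ N := by rw [← hsW]
      _ = ((((z - 1) ^ 2 : ℂ))⁻¹) ^ N • (adjQ α β z ^ m * (matM α β z ^ m * matM α β z ^ m)) := by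
          rw [_root_.smul_pow, Matrix.mul_smul, ← pow_add,
            show m + m = N by omega]
      _ = ((((z - 1) ^ 2 : ℂ))⁻¹) ^ N • ((((z - 1) ^ 4 : ℂ)) ^ m • 1 * matM α β z ^ m) := by
          rw [← mul_assoc, hQMpow]
      _ = (((((z - 1) ^ 2 : ℂ))⁻¹) ^ N * (((z - 1) ^ 4 : ℂ)) ^ m) • matM α β z ^ m := by
          rw [Matrix.smul_mul, one_mul, smul_smul]
      _ = matM α β z ^ m := by rw [hscal, one_smul]
      _ = (((z - 1) ^ 2 : ℂ) • symbW α β z) ^ m := by rw [hMzW]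
  refine ⟨part1, ⟨fun j => (polyQ α β ^ m).coeff j, part2⟩, ?_, part4, ?_⟩
  -- part 3
  · have hCinv : (leadC α β N)⁻¹ = !![1, 0; ((N : ℂ) * (β : ℂ) * ((α : ℂ) + (β : ℂ))), 1] :=
      Matrix.inv_eq_right_inv (leadC_mul_inv α β N).1
    have hCC : (leadC α β N)⁻¹ * leadC α β N = 1 := by
      rw [hCinv]; exact (leadC_mul_inv α β N).2
    refine ⟨fun j => (leadC α β N)⁻¹ * (polyQ α β ^ m).coeff j, fun z => ?_⟩
    rw [part2 z, Matrix.mul_add, Matrix.mul_smul, hCC, Finset.mul_sum]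
    simp [Matrix.mul_smul]
  -- part 5
  · intro k
    have hCinv : (leadC α β N)⁻¹ = !![1, 0; ((N : ℂ) * (β : ℂ) * ((α : ℂ) + (β : ℂ))), 1] :=
      Matrix.inv_eq_right_inv (leadC_mul_inv α β N).1
    set Ci : M2 := !![1, 0; ((N : ℂ) * (β : ℂ) * ((α : ℂ) + (β : ℂ))), 1] with hCi
    set q : M2[X] := Polynomial.C Ci * polyM α β ^ m with hqdef
    have hq : ∀ z : ℂ, evalMat z q = Ci * matM α β z ^ m := fun z => by
      rw [hqdef, _root_.map_mul, map_pow, evalMat_C, evalMat_polyM]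
    have gdef : ∀ a b : Fin 2, ∃ g : ℂ[X],
        ∀ z : ℂ, eval z g = z ^ k * (Ci * matM α β z ^ m) a b := by
      intro a b
      refine ⟨X ^ k * ∑ i ∈ Finset.range (q.natDegree + 1),
        Polynomial.C (q.coeff i a b) * X ^ i, fun z => ?_⟩
      rw [← hq z, evalMat_expand z (Nat.lt_succ_self _)]
      rw [eval_mul, eval_pow, eval_X, Polynomial.eval_finset_sum]
      simp only [eval_mul, eval_C, eval_pow, eval_X, Matrix.sum_apply, Matrix.smul_apply,
        smul_eq_mul]
      congr 1
      exact Finset.sum_congr rfl fun i _ => mul_comm _ _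
    have key : ∀ a b : Fin 2,
        (∮ z in C(1, 1/2),
          (z ^ k • ((leadC α β N)⁻¹ * adjQ α β z ^ m * symbW α β z ^ N)) a b) = 0 := by
      intro a b
      obtain ⟨g, hg⟩ := gdef a b
      have heq : Set.EqOn
          (fun z : ℂ => (z ^ k • ((leadC α β N)⁻¹ * adjQ α β z ^ m * symbW α β z ^ N)) a b)
          (fun z : ℂ => eval z g) (Metric.sphere (1 : ℂ) (1 / 2)) := by
        intro z hz
        have hz1 : z ≠ 1 := by
          intro h
          rw [Metric.mem_sphere, h] at hz
          norm_num at hz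
        have hMzW : ((z - 1) ^ 2 : ℂ) • symbW α β z = matM α β z := by
          rw [hsW, smul_smul, mul_inv_cancel₀ (hcz z hz1), one_smul]
        have h4 : adjQ α β z ^ m * symbW α β z ^ N = matM α β z ^ m := by
          rw [part4 z hz1, hMzW]
        show (z ^ k • ((leadC α β N)⁻¹ * adjQ α β z ^ m * symbW α β z ^ N)) a b = eval z g
        rw [mul_assoc, h4, hCinv, hg z, Matrix.smul_apply, smul_eq_mul]
      rw [circleIntegral.integral_congr (by norm_num) heq]
      exact Complex.circleIntegral_eq_zero_of_differentiable_on_off_countable (by norm_num)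
        Set.countable_empty g.continuous.continuousOn
        (fun z _ => g.differentiableAt)
    ext a b
    simp only [Matrix.of_apply, Matrix.zero_apply]
    rw [key a b, mul_zero]
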